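/- arXiv:2101.09613 — 10 statements merged into one kernel-verified Lean document; each statement's English description precedes it below -/
import Mathlib

section
/- For every finite nonempty set P ⊆ ℝⁿ and every labeling y : P → {−1, 1}, there exists ρ > 0 such that for every probability distribution D on P there is a single-threshold linear classifier h with Σ_{p∈P} D(p)·1[h(p) = y(p)] ≥ 1/2 + ρ. (Weak learnability of the class of single-threshold classifiers, binary-label case.) -/
/-- A single-threshold (linear) classifier on ℝⁿ with values in `A`:
there are labels `aPlus`, `aMinus`, a direction `lam` and a threshold `om` such that
the classifier outputs `aPlus` on the closed half-space `{p : lam ⬝ p ≥ om}` and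
`aMinus` elsewhere. -/
def IsSingleThreshold {n : ℕ} {A : Type*} (h : (Fin n → ℝ) → A) : Prop :=
  ∃ (aPlus aMinus : A) (lam : Fin n → ℝ) (om : ℝ),
    ∀ p, h p = if om ≤ ∑ i, lam i * p i then aPlus else aMinus

/-! Choose a direction `lam` along which the points of `P` have pairwise distinct projections,
and a point `p` of weight `D p ≥ 1 / |P|`. Label the closed half-space `lam ⬝ᵥ q ≥ lam ⬝ᵥ p` with
`y p` and its complement with `-y p`, and do the same for `lam ⬝ᵥ q ≤ lam ⬝ᵥ p`. Both classifiers
are right at `p` and, since the two half-spaces meet in `P` only at `p`, exactly one of them is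
right at every other point. Their accuracies therefore add up to `1 + D p`, so the better one has
accuracy at least `1/2 + 1 / (2 |P|)`. -/

theorem Module.exists_dual_injOn {K V : Type*} [Field K] [Infinite K] [AddCommGroup V]
    [Module K V] (s : Finset V) : ∃ φ : Module.Dual K V, Set.InjOn φ s := by
  classical
  -- `φ` has to avoid the proper subspaces `{φ | φ (p - q) = 0}`, which cannot cover the dual space.
  let kernels : Finset (Subspace K (Module.Dual K V)) :=
    s.offDiag.image fun pq => LinearMap.ker (Module.Dual.eval K V (pq.1 - pq.2))
  have htop : ⊤ ∉ kernels := by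
    simp only [kernels, Finset.mem_image, Finset.mem_offDiag, not_exists, not_and, Prod.forall]
    rintro p q ⟨-, -, hpq⟩ hker
    obtain ⟨φ, hφ⟩ := Module.Projective.exists_dual_ne_zero K (sub_ne_zero.mpr hpq)
    exact hφ (LinearMap.mem_ker.mp (hker ▸ Submodule.mem_top : φ ∈ _))
  obtain ⟨φ, hφ⟩ := Set.ne_univ_iff_exists_notMem _ |>.mp
    (Subspace.biUnion_ne_univ_of_top_notMem htop)
  refine ⟨φ, fun p hp q hq hpq => by_contra fun hne => hφ ?_⟩
  refine Set.mem_biUnion (Finset.mem_image_of_mem _ (a := (p, q))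
    (Finset.mem_offDiag.mpr ⟨hp, hq, hne⟩)) ?_
  simp [hpq]

theorem exists_dotProduct_injOn {K ι : Type*} [Field K] [Infinite K] [Fintype ι]
    (s : Finset (ι → K)) : ∃ lam : ι → K, Set.InjOn (lam ⬝ᵥ ·) s := by
  classical
  obtain ⟨φ, hφ⟩ := Module.exists_dual_injOn (K := K) s
  refine ⟨(dotProductEquiv K ι).symm φ, fun p hp q hq hpq => hφ hp hq ?_⟩
  simpa only [← dotProductEquiv_apply_apply, LinearEquiv.apply_symm_apply] using hpq

theorem eq_iff_neg_ne_of_eq_one_or_eq_neg_one {R : Type*} [Ring R] [CharZero R] {a b : R}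
    (ha : a = 1 ∨ a = -1) (hb : b = 1 ∨ b = -1) : a = b ↔ -a ≠ b := by
  rcases ha with rfl | rfl <;> rcases hb with rfl | rfl <;> norm_num

def weightedAccuracy {X A : Type*} [DecidableEq A] (P : Finset X) (D : X → ℝ) (y h : X → A) :
    ℝ :=
  ∑ p ∈ P, D p * if h p = y p then 1 else 0

theorem weightedAccuracy_add_of_exactly_one_correct {X A : Type*} [DecidableEq A]
    {P : Finset X} {D : X → ℝ} {y g₁ g₂ : X → A} {p : X} (hp : p ∈ P)
    (h₁ : g₁ p = y p) (h₂ : g₂ p = y p) (hxor : ∀ q ∈ P, q ≠ p → (g₁ q = y q ↔ g₂ q ≠ y q)) :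
    weightedAccuracy P D y g₁ + weightedAccuracy P D y g₂ = ∑ q ∈ P, D q + D p := by
  classical
  rw [weightedAccuracy, weightedAccuracy, ← Finset.sum_add_distrib, ← Finset.add_sum_erase _ _ hp,
    ← Finset.add_sum_erase _ _ hp, h₁, h₂]
  have hrest : ∀ q ∈ P.erase p,
      (D q * if g₁ q = y q then 1 else 0) + (D q * if g₂ q = y q then 1 else 0) = D q := by
    intro q hq
    obtain ⟨hqp, hq⟩ := Finset.mem_erase.mp hq
    by_cases hc : g₁ q = y q
    · simp [hc, (hxor q hq hqp).mp hc]
    · simp [hc, not_not.mp (mt (hxor q hq hqp).mpr hc)]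
  rw [Finset.sum_congr rfl hrest]
  simp only [if_true]
  ring

/-- Weak learnability of the class of single-threshold classifiers (binary-label case):
for every finite nonempty `P ⊆ ℝⁿ` and labeling `y : P → {−1,1}`, there is `ρ > 0` such
that for every probability distribution `D` on `P` some single-threshold classifier with
values in `{−1,1}` is correct with `D`-probability at least `1/2 + ρ`. -/
theorem single_threshold_weak_learnability {n : ℕ}
    (P : Finset (Fin n → ℝ)) (hP : P.Nonempty)
    (y : (Fin n → ℝ) → ℝ) (hy : ∀ p ∈ P, y p = 1 ∨ y p = -1) :
    ∃ ρ : ℝ, 0 < ρ ∧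
      ∀ D : (Fin n → ℝ) → ℝ, (∀ p ∈ P, 0 ≤ D p) → (∑ p ∈ P, D p = 1) →
        ∃ h : (Fin n → ℝ) → ℝ, IsSingleThreshold h ∧ (∀ p, h p = 1 ∨ h p = -1) ∧
          1 / 2 + ρ ≤ ∑ p ∈ P, D p * (if h p = y p then (1 : ℝ) else 0) := by
  obtain ⟨lam, hinj⟩ := exists_dotProduct_injOn P
  have hcard : (0 : ℝ) < P.card := by exact_mod_cast hP.card_pos
  refine ⟨1 / (2 * P.card), by positivity, fun D _ hD => ?_⟩
  obtain ⟨p, hp, hDp⟩ : ∃ p ∈ P, 1 / (P.card : ℝ) ≤ D p :=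
    Finset.exists_le_of_sum_le hP (by simp [hD, hcard.ne'])
  let g (μ q : Fin n → ℝ) : ℝ := if μ ⬝ᵥ p ≤ μ ⬝ᵥ q then y p else -y p
  have hg_values (μ q) : g μ q = 1 ∨ g μ q = -1 := by
    rcases hy p hp with h | h <;> dsimp only [g] <;> split_ifs <;> simp [h]
  have hg_neg (q) (hq : q ∈ P) (hqp : q ≠ p) : g (-lam) q = -g lam q := by
    have hne : lam ⬝ᵥ q ≠ lam ⬝ᵥ p := fun h => hqp (hinj hq hp h)
    rcases hne.lt_or_gt with h | h <;> simp [g, neg_dotProduct, h.le, not_le.mpr h]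
  have hsum : weightedAccuracy P D y (g lam) + weightedAccuracy P D y (g (-lam)) = 1 + D p := by
    rw [← hD]
    refine weightedAccuracy_add_of_exactly_one_correct hp (by simp [g]) (by simp [g])
      fun q hq hqp => ?_
    rw [hg_neg q hq hqp]
    exact eq_iff_neg_ne_of_eq_one_or_eq_neg_one (hg_values lam q) (hy q hq)
  obtain ⟨μ, hμ⟩ : ∃ μ, 1 + D p ≤ 2 * weightedAccuracy P D y (g μ) := by
    rcases le_total (weightedAccuracy P D y (g lam)) (weightedAccuracy P D y (g (-lam))) with h | h
    exacts [⟨-lam, by linarith⟩, ⟨lam, by linarith⟩]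
  refine ⟨g μ, ⟨_, _, μ, _, fun _ => rfl⟩, hg_values μ, ?_⟩
  change _ ≤ weightedAccuracy P D y (g μ)
  rw [show 1 / (2 * (P.card : ℝ)) = 1 / P.card / 2 by ring]
  linarith
end

section
/- Let P be a finite nonempty set, y : P → {−1, 1} a labeling, d₁ a probability distribution on P, and γ ∈ (0, 1/2]. Let h₁, …, h_T : P → {−1, 1} and define recursively: ε_t = Σ_p d_t(p)·1[h_t(p) ≠ y(p)], assumed to satisfy 0 < ε_t ≤ 1/2 − γ; α_t = (1/2)·log((1−ε_t)/ε_t); Z_t = Σ_p d_t(p)·exp(−α_t·y(p)·h_t(p)); and d_{t+1}(p) = d_t(p)·exp(−α_t·y(p)·h_t(p))/Z_t. Let H_T : P → {−1, 1} satisfy H_T(p) = 1 whenever Σ_{t=1}^T α_t h_t(p) > 0 and H_T(p) = −1 whenever Σ_{t=1}^T α_t h_t(p) < 0. Then Σ_p d₁(p)·1[H_T(p) ≠ y(p)] ≤ ∏_{t=1}^T √(1 − 4(1/2 − ε_t)²) ≤ exp(−2γ²T). (Training-error bound for the binary AdaBoost algorithm.) -/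
/-- Training-error bound for binary AdaBoost.  `d t` are the successive distributions
(indexed so that `d 0 = d₁` is the initial distribution and round `t` runs over
`t ∈ Finset.range T`), `h t` the weak hypotheses with values in `{−1,1}`,
`ε t` the weighted errors (assumed in `(0, 1/2 − γ]`), `a t` the AdaBoost weights,
`Z t` the normalizers, and `H` the final weighted-majority-vote classifier.
Then the `d 0`-weighted training error of `H` is at most
`∏_t √(1 − 4(1/2 − ε t)²) ≤ exp(−2γ²T)`. -/
theorem adaboost_training_error_bound {α : Type*} (P : Finset α) (hP : P.Nonempty)
    (y : α → ℝ) (hy : ∀ p ∈ P, y p = 1 ∨ y p = -1)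
    (T : ℕ) (h : ℕ → α → ℝ) (hh : ∀ t < T, ∀ p ∈ P, h t p = 1 ∨ h t p = -1)
    (γ : ℝ) (hγ0 : 0 < γ) (hγhalf : γ ≤ 1 / 2)
    (d : ℕ → α → ℝ) (hd0 : ∀ p ∈ P, 0 ≤ d 0 p) (hd1 : ∑ p ∈ P, d 0 p = 1)
    (ε : ℕ → ℝ)
    (hε : ∀ t < T, ε t = ∑ p ∈ P, d t p * (if h t p ≠ y p then (1 : ℝ) else 0))
    (hεpos : ∀ t < T, 0 < ε t) (hεub : ∀ t < T, ε t ≤ 1 / 2 - γ)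
    (a : ℕ → ℝ) (ha : ∀ t < T, a t = (1 / 2) * Real.log ((1 - ε t) / ε t))
    (Z : ℕ → ℝ)
    (hZ : ∀ t < T, Z t = ∑ p ∈ P, d t p * Real.exp (-(a t) * (y p * h t p)))
    (hdrec : ∀ t < T, ∀ p ∈ P,
      d (t + 1) p = d t p * Real.exp (-(a t) * (y p * h t p)) / Z t)
    (H : α → ℝ)
    (hH1 : ∀ p ∈ P, 0 < ∑ t ∈ Finset.range T, a t * h t p → H p = 1)
    (hH2 : ∀ p ∈ P, ∑ t ∈ Finset.range T, a t * h t p < 0 → H p = -1) :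
    (∑ p ∈ P, d 0 p * (if H p ≠ y p then (1 : ℝ) else 0)) ≤
        (∏ t ∈ Finset.range T, Real.sqrt (1 - 4 * (1 / 2 - ε t) ^ 2)) ∧
      (∏ t ∈ Finset.range T, Real.sqrt (1 - 4 * (1 / 2 - ε t) ^ 2)) ≤
        Real.exp (-2 * γ ^ 2 * T) := by

  classical
  have hε1 : ∀ t < T, ε t < 1 / 2 := fun t ht => by have := hεub t ht; linarith
  -- pointwise rewrite of the exponential weight
  have hpt : ∀ t, t < T → ∀ p ∈ P,
      Real.exp (-(a t) * (y p * h t p)) =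
        if h t p ≠ y p then Real.exp (a t) else Real.exp (-(a t)) := by
    intro t ht p hp
    rcases hy p hp with h1 | h1 <;> rcases hh t ht p hp with h2 | h2 <;>
      simp [h1, h2] <;> norm_num
  -- splitting the normalizer
  have hZsplit : ∀ t, t < T → (∑ p ∈ P, d t p) = 1 →
      Z t = Real.exp (a t) * ε t + Real.exp (-(a t)) * (1 - ε t) := by
    intro t ht hsum
    have e1 : ∀ p ∈ P, d t p * Real.exp (-(a t) * (y p * h t p)) =
        Real.exp (a t) * (d t p * (if h t p ≠ y p then (1:ℝ) else 0)) +
        Real.exp (-(a t)) * (d t p * ((1:ℝ) - (if h t p ≠ y p then (1:ℝ) else 0))) := by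
      intro p hp
      rw [hpt t ht p hp]
      by_cases hc : h t p ≠ y p <;> simp [hc] <;> ring
    rw [hZ t ht, Finset.sum_congr rfl e1, Finset.sum_add_distrib, ← Finset.mul_sum,
      ← Finset.mul_sum]
    have e2 : ∑ p ∈ P, d t p * ((1:ℝ) - (if h t p ≠ y p then (1:ℝ) else 0)) =
        (∑ p ∈ P, d t p) - ∑ p ∈ P, d t p * (if h t p ≠ y p then (1:ℝ) else 0) := by
      rw [← Finset.sum_sub_distrib]; exact Finset.sum_congr rfl fun p _ => by ring
    rw [e2, hsum, ← hε t ht]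
  -- closed form of the normalizer
  have hZval : ∀ t, t < T → (∑ p ∈ P, d t p) = 1 →
      Z t = Real.sqrt (1 - 4 * (1 / 2 - ε t) ^ 2) := by
    intro t ht hsum
    have hε0 := hεpos t ht
    have hε1' := hε1 t ht
    set u := Real.sqrt (ε t) with hu
    set v := Real.sqrt (1 - ε t) with hv
    have hu0 : 0 < u := Real.sqrt_pos.2 hε0
    have hv0 : 0 < v := Real.sqrt_pos.2 (by linarith)
    have hu2 : u ^ 2 = ε t := Real.sq_sqrt hε0.le
    have hv2 : v ^ 2 = 1 - ε t := Real.sq_sqrt (by linarith)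
    have hea : Real.exp (a t) = v / u := by
      rw [ha t ht]
      have e3 : (1 - ε t) / ε t = (v / u) ^ 2 := by
        rw [div_pow, hu2, hv2]
      rw [e3, Real.log_pow]
      push_cast
      rw [show (1:ℝ) / 2 * (2 * Real.log (v / u)) = Real.log (v / u) by ring,
        Real.exp_log (by positivity)]
    have hena : Real.exp (-(a t)) = u / v := by
      rw [Real.exp_neg, hea, inv_div]
    rw [hZsplit t ht hsum, hea, hena]
    have h4 : 1 - 4 * (1 / 2 - ε t) ^ 2 = (2 * u * v) ^ 2 := by
      have e5 : (2 * u * v) ^ 2 = 4 * u ^ 2 * v ^ 2 := by ring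
      rw [e5, hu2, hv2]; ring
    rw [h4, Real.sqrt_sq (by positivity)]
    have hv2' : (1:ℝ) - ε t = v ^ 2 := hv2.symm
    rw [hv2', ← hu2]
    field_simp
    ring
  -- main invariant by induction
  have hstate : ∀ t, t ≤ T →
      (∀ p ∈ P, 0 ≤ d t p) ∧ (∑ p ∈ P, d t p) = 1 ∧
      ∀ p ∈ P, d t p * ∏ s ∈ Finset.range t, Z s =
        d 0 p * Real.exp (-(y p) * ∑ s ∈ Finset.range t, a s * h s p) := by
    intro t
    induction t with
    | zero => exact fun _ => ⟨hd0, hd1, fun p hp => by simp⟩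
    | succ t ih =>
      intro ht1
      have ht : t < T := ht1
      obtain ⟨hnn, hsum, hunroll⟩ := ih ht.le
      have hZt : 0 < Z t := by
        rw [hZval t ht hsum]
        apply Real.sqrt_pos.2
        have h5 := hεpos t ht
        have h6 := hε1 t ht
        nlinarith
      refine ⟨?_, ?_, ?_⟩
      · intro p hp
        rw [hdrec t ht p hp]
        have := hnn p hp
        positivity
      · have e6 : ∑ p ∈ P, d (t + 1) p =
            (∑ p ∈ P, d t p * Real.exp (-(a t) * (y p * h t p))) / Z t := by
          rw [Finset.sum_div]; exact Finset.sum_congr rfl fun p hp => hdrec t ht p hp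
        rw [e6, ← hZ t ht, div_self hZt.ne']
      · intro p hp
        rw [Finset.prod_range_succ, Finset.sum_range_succ, hdrec t ht p hp]
        have e7 : d t p * Real.exp (-(a t) * (y p * h t p)) / Z t *
            ((∏ s ∈ Finset.range t, Z s) * Z t) =
            d t p * (∏ s ∈ Finset.range t, Z s) *
              Real.exp (-(a t) * (y p * h t p)) := by
          field_simp
        rw [e7, hunroll p hp, mul_assoc, ← Real.exp_add]
        congr 2
        ring
  obtain ⟨hnnT, hsumT, hunrollT⟩ := hstate T le_rfl
  have hprodZ : ∏ t ∈ Finset.range T, Z t =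
      ∑ p ∈ P, d 0 p * Real.exp (-(y p) * ∑ t ∈ Finset.range T, a t * h t p) := by
    calc ∏ t ∈ Finset.range T, Z t
        = ∑ p ∈ P, d T p * ∏ t ∈ Finset.range T, Z t := by
          rw [← Finset.sum_mul, hsumT, one_mul]
      _ = _ := Finset.sum_congr rfl fun p hp => hunrollT p hp
  have hprodsqrt : ∏ t ∈ Finset.range T, Z t =
      ∏ t ∈ Finset.range T, Real.sqrt (1 - 4 * (1 / 2 - ε t) ^ 2) :=
    Finset.prod_congr rfl fun t htm => by
      have ht := Finset.mem_range.1 htm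
      exact hZval t ht (hstate t ht.le).2.1
  constructor
  · rw [← hprodsqrt, hprodZ]
    apply Finset.sum_le_sum
    intro p hp
    by_cases hc : H p ≠ y p
    · rw [if_pos hc]
      have hF : 0 ≤ -(y p) * ∑ t ∈ Finset.range T, a t * h t p := by
        rcases hy p hp with h1 | h1
        · rw [h1]
          by_contra hlt
          push_neg at hlt
          have hpos : 0 < ∑ t ∈ Finset.range T, a t * h t p := by nlinarith
          exact hc ((hH1 p hp hpos).trans h1.symm)
        · rw [h1]
          by_contra hlt
          push_neg at hlt
          have hneg : ∑ t ∈ Finset.range T, a t * h t p < 0 := by nlinarith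
          exact hc ((hH2 p hp hneg).trans h1.symm)
      exact mul_le_mul_of_nonneg_left (Real.one_le_exp hF) (hd0 p hp)
    · rw [if_neg hc, mul_zero]
      exact mul_nonneg (hd0 p hp) (Real.exp_pos _).le
  · have hterm : ∀ t ∈ Finset.range T,
        Real.sqrt (1 - 4 * (1 / 2 - ε t) ^ 2) ≤ Real.exp (-(2 * γ ^ 2)) := by
      intro t htm
      have ht := Finset.mem_range.1 htm
      have h2 : 1 - 4 * (1 / 2 - ε t) ^ 2 ≤ 1 - 4 * γ ^ 2 := by
        have hub := hεub t ht
        have hp := hεpos t ht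
        nlinarith
      have h3 : 1 - 4 * γ ^ 2 ≤ Real.exp (-(4 * γ ^ 2)) := by
        have := Real.add_one_le_exp (-(4 * γ ^ 2))
        linarith
      calc Real.sqrt (1 - 4 * (1 / 2 - ε t) ^ 2)
          ≤ Real.sqrt (Real.exp (-(4 * γ ^ 2))) := Real.sqrt_le_sqrt (by linarith)
        _ = Real.exp (-(2 * γ ^ 2)) := by
            rw [show (-(4 * γ ^ 2) : ℝ) = -(2 * γ ^ 2) + -(2 * γ ^ 2) by ring,
              Real.exp_add, Real.sqrt_mul_self (Real.exp_pos _).le]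
    calc ∏ t ∈ Finset.range T, Real.sqrt (1 - 4 * (1 / 2 - ε t) ^ 2)
        ≤ ∏ t ∈ Finset.range T, Real.exp (-(2 * γ ^ 2)) :=
          Finset.prod_le_prod (fun t _ => Real.sqrt_nonneg _) hterm
      _ = Real.exp (-2 * γ ^ 2 * T) := by
          rw [Finset.prod_const, ← Real.exp_nat_mul, Finset.card_range]
          congr 1
          ring
end

section
/- Let A be a finite label set with |A| = k ≥ 2, let the data be indices i ∈ {1, …, m} with true labels y_i ∈ A, let γ ∈ (0, 1], and set η = log(1 + γ). Given classifiers h₁, …, h_T : {1,…,m} → A, define F⁰(i,a) = 0, F^t(i,a) = Σ_{s=1}^t 1[h_s(i) = a], L_t(i) = Σ_{ã ≠ y_i} exp(η(F^t(i,ã) − F^t(i,y_i))), and L̃_t = (1/m)·Σ_{i=1}^m L_t(i). Suppose that for every t < T the weak-learning contraction holds: L̃_{t+1} ≤ (1 + ((1−γ)/k + γ)(e^{−η} − 1) + ((1−γ)/k)(e^{η} − 1))·L̃_t. Then for any final classifier H_T with F^T(i, H_T(i)) ≥ F^T(i, a) for all a ∈ A, the fraction of training mistakes satisfies (1/m)·Σ_{i=1}^m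 1[H_T(i) ≠ y_i] ≤ (k − 1)·exp(−γ²T/2). (Training-error bound for the multiclass boosting algorithm.) -/
/-- Training-error bound for the multiclass boosting algorithm.  Labels live in a finite
set `A` with `|A| = k ≥ 2`, the data are indices `i : Fin m` with true labels `y i`,
the edge is `γ ∈ (0,1]` and the step size is `η = log(1+γ)`.  `F t i a` counts the votes
for label `a` among the first `t` weak hypotheses, `L t i` is the multiclass exponential
loss of example `i` and `Ltil t` its average.  Assuming the per-round weak-learning
contraction, any final classifier `H` maximizing the vote count `F T i ·` makes at most
a `(k−1)·exp(−γ²T/2)` fraction of training mistakes. -/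
theorem multiclass_boosting_training_error {A : Type*} [Fintype A] [DecidableEq A]
    (k : ℕ) (hk : Fintype.card A = k) (hk2 : 2 ≤ k)
    (m : ℕ) (hm : 1 ≤ m) (y : Fin m → A)
    (γ : ℝ) (hγ0 : 0 < γ) (hγ1 : γ ≤ 1)
    (η : ℝ) (hη : η = Real.log (1 + γ))
    (T : ℕ) (h : ℕ → Fin m → A)
    (F : ℕ → Fin m → A → ℝ)
    (hF : ∀ t i a, F t i a = ∑ s ∈ Finset.range t, (if h s i = a then (1 : ℝ) else 0))
    (L : ℕ → Fin m → ℝ)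
    (hL : ∀ t i, L t i =
      ∑ b ∈ Finset.univ.erase (y i), Real.exp (η * (F t i b - F t i (y i))))
    (Ltil : ℕ → ℝ) (hLtil : ∀ t, Ltil t = (1 / (m : ℝ)) * ∑ i, L t i)
    (hcontr : ∀ t < T, Ltil (t + 1) ≤
      (1 + ((1 - γ) / (k : ℝ) + γ) * (Real.exp (-η) - 1)
         + ((1 - γ) / (k : ℝ)) * (Real.exp η - 1)) * Ltil t)
    (H : Fin m → A) (hH : ∀ i a, F T i a ≤ F T i (H i)) :
    (1 / (m : ℝ)) * ∑ i, (if H i ≠ y i then (1 : ℝ) else 0) ≤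
      ((k : ℝ) - 1) * Real.exp (-(γ ^ 2) * T / 2) := by
  have hγ1' : (0:ℝ) < 1 + γ := by linarith
  have hexpη : Real.exp η = 1 + γ := by rw [hη, Real.exp_log hγ1']
  have hexpnegη : Real.exp (-η) = (1 + γ)⁻¹ := by
    rw [Real.exp_neg, hexpη]
  have hηnn : 0 ≤ η := by
    rw [hη]; exact Real.log_nonneg (by linarith)
  set c : ℝ := 1 + ((1 - γ) / (k : ℝ) + γ) * (Real.exp (-η) - 1)
         + ((1 - γ) / (k : ℝ)) * (Real.exp η - 1) with hc
  have hkr : (2:ℝ) ≤ (k:ℝ) := by exact_mod_cast hk2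
  have hkpos : (0:ℝ) < (k:ℝ) := by linarith
  -- c ≤ 1 - γ²/2 and c ≥ 0
  have hcval : c = 1 - γ^2/(1+γ) * (1 - (1-γ)/(k:ℝ)) := by
    rw [hc, hexpη, hexpnegη]
    field_simp
    ring
  have hfrac0 : 0 ≤ (1-γ)/(k:ℝ) := div_nonneg (by linarith) (le_of_lt hkpos)
  have hfrac : (1-γ)/(k:ℝ) ≤ (1-γ)/2 := by
    apply div_le_div_of_nonneg_left (by linarith) (by norm_num) hkr
  -- careful: 1-γ ≥ 0 needed for that; holds
  have hcle : c ≤ 1 - γ^2/2 := by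
    rw [hcval]
    have h1 : (1+γ)/2 ≤ 1 - (1-γ)/(k:ℝ) := by linarith
    have h2 : γ^2/(1+γ) * ((1+γ)/2) ≤ γ^2/(1+γ) * (1 - (1-γ)/(k:ℝ)) := by
      apply mul_le_mul_of_nonneg_left h1
      positivity
    have h3 : γ^2/(1+γ) * ((1+γ)/2) = γ^2/2 := by
      field_simp
    linarith
  have hc0 : 0 ≤ c := by
    rw [hcval]
    have h1 : 1 - (1-γ)/(k:ℝ) ≤ 1 := by linarith
    have h2 : γ^2/(1+γ) * (1 - (1-γ)/(k:ℝ)) ≤ γ^2/(1+γ) * 1 := by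
      apply mul_le_mul_of_nonneg_left h1; positivity
    have h3 : γ^2/(1+γ) ≤ 1 := by
      rw [div_le_one hγ1']; nlinarith
    linarith
  have hcexp : c ≤ Real.exp (-(γ^2)/2) := by
    have := Real.add_one_le_exp (-(γ^2)/2)
    linarith
  -- L t i nonneg
  have hLnn : ∀ t i, 0 ≤ L t i := by
    intro t i
    rw [hL]
    exact Finset.sum_nonneg fun b _ => (Real.exp_pos _).le
  -- Ltil 0 = k - 1
  have hL0 : ∀ i, L 0 i = (k:ℝ) - 1 := by
    intro i
    rw [hL]
    have : ∀ b ∈ Finset.univ.erase (y i),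
        Real.exp (η * (F 0 i b - F 0 i (y i))) = 1 := by
      intro b _
      rw [hF, hF]
      simp
    rw [Finset.sum_congr rfl this, Finset.sum_const, nsmul_eq_mul, mul_one]
    rw [Finset.card_erase_of_mem (Finset.mem_univ _), Finset.card_univ, hk]
    have : (1:ℕ) ≤ k := by omega
    push_cast [Nat.cast_sub this]
    ring_nf
  have hmpos : (0:ℝ) < (m:ℝ) := by exact_mod_cast hm
  have hLtil0 : Ltil 0 = (k:ℝ) - 1 := by
    rw [hLtil]
    rw [Finset.sum_congr rfl fun i _ => hL0 i, Finset.sum_const, Finset.card_univ,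
      Fintype.card_fin, nsmul_eq_mul]
    field_simp
  -- Induction: Ltil t ≤ c^t * (k-1) for t ≤ T
  have hind : ∀ t, t ≤ T → Ltil t ≤ c^t * ((k:ℝ) - 1) := by
    intro t
    induction t with
    | zero => intro _; rw [hLtil0]; simp
    | succ n ih =>
      intro hn
      have h1 := hcontr n (by omega)
      have h2 := ih (by omega)
      calc Ltil (n+1) ≤ c * Ltil n := h1
        _ ≤ c * (c^n * ((k:ℝ)-1)) := mul_le_mul_of_nonneg_left h2 hc0
        _ = c^(n+1) * ((k:ℝ)-1) := by ring
  -- indicator ≤ L T i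
  have hind2 : ∀ i, (if H i ≠ y i then (1:ℝ) else 0) ≤ L T i := by
    intro i
    by_cases hi : H i = y i
    · simp [hi]; exact hLnn T i
    · rw [if_pos hi]
      rw [hL]
      have hmem : H i ∈ Finset.univ.erase (y i) :=
        Finset.mem_erase.mpr ⟨hi, Finset.mem_univ _⟩
      have h1 : (1:ℝ) ≤ Real.exp (η * (F T i (H i) - F T i (y i))) := by
        rw [show (1:ℝ) = Real.exp 0 by simp]
        apply Real.exp_le_exp.mpr
        exact mul_nonneg hηnn (by linarith [hH i (y i)])
      calc (1:ℝ) ≤ Real.exp (η * (F T i (H i) - F T i (y i))) := h1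
        _ ≤ _ := Finset.single_le_sum (f := fun b => Real.exp (η * (F T i b - F T i (y i)))) (fun b _ => (Real.exp_pos _).le) hmem
  -- combine
  have hfinal : (1 / (m : ℝ)) * ∑ i, (if H i ≠ y i then (1 : ℝ) else 0) ≤ Ltil T := by
    rw [hLtil]
    apply mul_le_mul_of_nonneg_left _ (by positivity)
    exact Finset.sum_le_sum fun i _ => hind2 i
  have hpow : c^T ≤ (Real.exp (-(γ^2)/2))^T := pow_le_pow_left₀ hc0 hcexp T
  have hexppow : (Real.exp (-(γ^2)/2))^T = Real.exp (-(γ^2) * T / 2) := by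
    rw [← Real.exp_nat_mul]
    ring_nf
  have hk1 : (0:ℝ) ≤ (k:ℝ) - 1 := by linarith
  calc (1 / (m : ℝ)) * ∑ i, (if H i ≠ y i then (1 : ℝ) else 0)
      ≤ Ltil T := hfinal
    _ ≤ c^T * ((k:ℝ)-1) := hind T le_rfl
    _ ≤ (Real.exp (-(γ^2)/2))^T * ((k:ℝ)-1) := by
        exact mul_le_mul_of_nonneg_right hpow hk1
    _ = ((k:ℝ)-1) * Real.exp (-(γ^2) * T / 2) := by rw [hexppow]; ring
end

section
/- Let P ⊆ ℝⁿ be finite, let D be a probability distribution on P with D(p) > 0 for every p ∈ P, let A be a finite label set with |A| ≥ 2, and let c : P × A → ℝ be a payoff function. Suppose there exists an extreme point p̃ of the convex hull of P at which c(p̃, ·) is not constant on A. Then there exists a single-threshold linear classifier h with Σ_{p∈P} D(p)·c(p, h(p)) > Σ_{p∈P} D(p)·(1/|A|)·Σ_{a∈A} c(p, a); that is, some single-threshold classifier strictly outperforms the uniform random guesser in expected payoff. -/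
/-!
Since `p̃` is an extreme point of the convex hull of the finite set `P`, it does not lie in the
(compact) convex hull of `P \ {p̃}`, so Hahn–Banach gives a hyperplane strictly separating `p̃`
from all other points of `P`. On the side of `p̃` predict a label maximizing `c p̃`; as `c p̃` is
not constant, this beats its mean over `A` strictly. On the other side predict one label
maximizing the `D`-weighted payoff of the remaining points; the random guesser's payoff there is
the mean of these weighted payoffs over `A`, hence no larger.
-/

open Finset

section UniformMean

variable {A : Type*} [Fintype A]

/-- The expected payoff of the uniform random guesser when the payoff of label `a` is `g a`. -/
noncomputable def uniformMean (g : A → ℝ) : ℝ := (1 / (Fintype.card A : ℝ)) * ∑ a, g a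

theorem sum_sub_uniformMean [Nonempty A] (g : A → ℝ) : ∑ a, (g a - uniformMean g) = 0 := by
  rw [sum_sub_distrib, sum_const, card_univ, nsmul_eq_mul, uniformMean]
  field_simp
  ring

theorem exists_uniformMean_le_apply [Nonempty A] (g : A → ℝ) : ∃ a, uniformMean g ≤ g a := by
  obtain ⟨a, -, ha⟩ := exists_le_of_sum_le (f := fun _ => (0 : ℝ))
    (g := fun a => g a - uniformMean g) univ_nonempty (by rw [sum_sub_uniformMean, sum_const_zero])
  exact ⟨a, sub_nonneg.mp ha⟩

theorem exists_uniformMean_lt_apply (g : A → ℝ) (hg : ∃ a b, g a ≠ g b) :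
    ∃ a, uniformMean g < g a := by
  obtain ⟨a, b, hab⟩ := hg
  have : Nonempty A := ⟨a⟩
  have hne : ∃ x ∈ univ, g x - uniformMean g ≠ 0 := by
    by_contra! h
    exact hab (by linarith [h a (mem_univ a), h b (mem_univ b)])
  obtain ⟨x, -, hx⟩ := exists_pos_of_sum_zero_of_exists_nonzero _ (sum_sub_uniformMean g) hne
  exact ⟨x, sub_pos.mp hx⟩

theorem sum_mul_uniformMean {ι : Type*} (s : Finset ι) (w : ι → ℝ) (g : ι → A → ℝ) :
    ∑ i ∈ s, w i * uniformMean (g i) = uniformMean fun a => ∑ i ∈ s, w i * g i a := by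
  simp only [uniformMean, mul_sum]
  rw [sum_comm]
  simp only [mul_left_comm]

end UniformMean

theorem notMem_convexHull_sdiff_of_mem_extremePoints {𝕜 E : Type*} [Field 𝕜] [LinearOrder 𝕜]
    [IsStrictOrderedRing 𝕜] [AddCommGroup E] [Module 𝕜 E] {s : Set E} {x : E}
    (hx : x ∈ (convexHull 𝕜 s).extremePoints 𝕜) : x ∉ convexHull 𝕜 (s \ {x}) := fun hmem =>
  ((convex_convexHull 𝕜 s).mem_extremePoints_iff_mem_sdiff_convexHull_sdiff.mp hx).2 <|
    convexHull_mono (Set.sdiff_subset_sdiff_left (subset_convexHull 𝕜 s)) hmem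

theorem exists_strongDual_separating_extremePoint {E : Type*} [TopologicalSpace E]
    [AddCommGroup E] [Module ℝ E] [IsTopologicalAddGroup E] [ContinuousSMul ℝ E]
    [LocallyConvexSpace ℝ E] [T2Space E] {s : Set E} (hs : s.Finite) {x : E}
    (hx : x ∈ (convexHull ℝ s).extremePoints ℝ) :
    ∃ (f : StrongDual ℝ E) (u : ℝ), u < f x ∧ ∀ y ∈ s, y ≠ x → f y < u := by
  obtain ⟨f, u, hlt, hgt⟩ := geometric_hahn_banach_closed_point (convex_convexHull ℝ _)
    ((hs.sdiff (t := {x})).isClosed_convexHull ℝ) (notMem_convexHull_sdiff_of_mem_extremePoints hx)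
  exact ⟨f, u, hgt, fun y hy hyx => hlt y (subset_convexHull ℝ _ ⟨hy, hyx⟩)⟩

theorem isSingleThreshold_ite_le {n : ℕ} {A : Type*} (f : (Fin n → ℝ) →ₗ[ℝ] ℝ) (u : ℝ)
    (aPlus aMinus : A) : IsSingleThreshold fun p => if u ≤ f p then aPlus else aMinus :=
  ⟨aPlus, aMinus, fun i => f fun j => if i = j then 1 else 0, u, fun p => by
    simp only [f.pi_apply_eq_sum_univ p, smul_eq_mul, mul_comm (p _)]⟩

theorem single_threshold_beats_random_guesser_general {n : ℕ} {A : Type*} [Fintype A]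
    (P : Finset (Fin n → ℝ))
    (D : (Fin n → ℝ) → ℝ) (hD0 : ∀ p ∈ P, 0 < D p)
    (c : (Fin n → ℝ) → A → ℝ)
    (ptil : Fin n → ℝ)
    (hext : ptil ∈ Set.extremePoints ℝ (convexHull ℝ (P : Set (Fin n → ℝ))))
    (hnc : ∃ a b : A, c ptil a ≠ c ptil b) :
    ∃ h : (Fin n → ℝ) → A, IsSingleThreshold h ∧
      ∑ p ∈ P, D p * ((1 / (Fintype.card A : ℝ)) * ∑ a, c p a) <
        ∑ p ∈ P, D p * c p (h p) := by
  have hmem : ptil ∈ P := extremePoints_convexHull_subset hext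
  have : Nonempty A := ⟨hnc.choose⟩
  obtain ⟨f, u, hu, hf⟩ := exists_strongDual_separating_extremePoint P.finite_toSet hext
  obtain ⟨aPlus, haPlus⟩ := exists_uniformMean_lt_apply (c ptil) hnc
  obtain ⟨aMinus, haMinus⟩ := exists_uniformMean_le_apply fun a => ∑ p ∈ P.erase ptil, D p * c p a
  refine ⟨fun p => if u ≤ f p then aPlus else aMinus,
    isSingleThreshold_ite_le f.toLinearMap u aPlus aMinus, ?_⟩
  change ∑ p ∈ P, D p * uniformMean (c p) < _
  rw [← add_sum_erase _ _ hmem, ← add_sum_erase _ _ hmem, sum_mul_uniformMean]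
  refine add_lt_add_of_lt_of_le ?_ (haMinus.trans_eq (sum_congr rfl fun p hp => ?_))
  · simp only [if_pos hu.le]
    exact mul_lt_mul_of_pos_left haPlus (hD0 ptil hmem)
  · rw [mem_erase] at hp
    simp only [if_neg (hf p hp.2 hp.1).not_ge]

/-- If `D` is a strictly positive distribution on a finite `P ⊆ ℝⁿ`, `A` a finite label
set with at least two labels, and `c` a payoff function which is not constant in the
label at some extreme point `p̃` of the convex hull of `P`, then some single-threshold
classifier strictly outperforms the uniform random guesser in expected payoff. -/
theorem single_threshold_beats_random_guesser {n : ℕ} {A : Type*} [Fintype A]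
    (hA : 2 ≤ Fintype.card A)
    (P : Finset (Fin n → ℝ))
    (D : (Fin n → ℝ) → ℝ) (hD0 : ∀ p ∈ P, 0 < D p) (hD1 : ∑ p ∈ P, D p = 1)
    (c : (Fin n → ℝ) → A → ℝ)
    (ptil : Fin n → ℝ) (hmem : ptil ∈ P)
    (hext : ptil ∈ Set.extremePoints ℝ (convexHull ℝ (P : Set (Fin n → ℝ))))
    (hnc : ∃ a b : A, c ptil a ≠ c ptil b) :
    ∃ h : (Fin n → ℝ) → A, IsSingleThreshold h ∧
      ∑ p ∈ P, D p * ((1 / (Fintype.card A : ℝ)) * ∑ a, c p a) <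
        ∑ p ∈ P, D p * c p (h p) :=
  single_threshold_beats_random_guesser_general P D hD0 c ptil hext hnc
end

section
/- In the setting of the binary AdaBoost recursion — P finite nonempty, d₁ a probability distribution on P, y : P → {−1,1}, h_k : P → {−1,1}, α_k ∈ ℝ, Z_k = Σ_p d_k(p)·exp(−α_k·y(p)·h_k(p)) > 0, d_{k+1}(p) = d_k(p)·exp(−α_k·y(p)·h_k(p))/Z_k — the total weighted exponential loss equals the product of the normalizers: Σ_{p∈P} d₁(p)·exp(−y(p)·F_t(p)) = ∏_{k=1}^t Z_k, where F_t(p) = Σ_{k=1}^t α_k·h_k(p). -/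
/-!
Since `exp (-y F_t) = ∏ₖ exp (-αₖ y hₖ)`, unrolling the recursion gives
`d_{t+1}(p) · ∏ₖ Zₖ = d₁(p) · exp (-y(p) F_t(p))`; summing over `p` and using that `d_{t+1}`
has total mass one yields the identity.
-/

open Finset

theorem mul_prod_Icc_eq_mul_prod_of_succ_eq_div {K : Type*} [Field K] {w g Z : ℕ → K} {t : ℕ}
    (hZ : ∀ k, 1 ≤ k → k ≤ t → Z k ≠ 0)
    (hw : ∀ k, 1 ≤ k → k ≤ t → w (k + 1) = w k * g k / Z k) :
    w (t + 1) * ∏ k ∈ Icc 1 t, Z k = w 1 * ∏ k ∈ Icc 1 t, g k := by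
  induction t with
  | zero => simp
  | succ s ih =>
    have hs : 1 ≤ s + 1 := Nat.le_add_left 1 s
    have ih' := ih (fun k h1 h2 => hZ k h1 (by omega)) (fun k h1 h2 => hw k h1 (by omega))
    rw [prod_Icc_succ_top hs, prod_Icc_succ_top hs, hw (s + 1) hs le_rfl, ← mul_assoc (w 1),
      ← ih']
    field_simp [hZ (s + 1) hs le_rfl]

theorem sum_eq_one_of_eq_div_sum {ι K : Type*} [Field K] {P : Finset ι} {w w' : ι → K} {Z : K}
    (hZ : Z = ∑ p ∈ P, w p) (hZ0 : Z ≠ 0) (hw' : ∀ p ∈ P, w' p = w p / Z) :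
    ∑ p ∈ P, w' p = 1 := by
  rw [sum_congr rfl hw', ← sum_div, ← hZ, div_self hZ0]

theorem adaboost_exp_loss_eq_prod_normalizers_general {α : Type*} (P : Finset α)
    (y : α → ℝ)
    (t : ℕ) (h : ℕ → α → ℝ)
    (a : ℕ → ℝ)
    (d : ℕ → α → ℝ) (hd1 : ∑ p ∈ P, d 1 p = 1)
    (Z : ℕ → ℝ)
    (hZ : ∀ k, 1 ≤ k → k ≤ t →
      Z k = ∑ p ∈ P, d k p * Real.exp (-(a k) * (y p * h k p)))
    (hZpos : ∀ k, 1 ≤ k → k ≤ t → 0 < Z k)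
    (hdrec : ∀ k, 1 ≤ k → k ≤ t → ∀ p ∈ P,
      d (k + 1) p = d k p * Real.exp (-(a k) * (y p * h k p)) / Z k) :
    ∑ p ∈ P, d 1 p * Real.exp (-(y p * ∑ k ∈ Finset.Icc 1 t, a k * h k p)) =
      ∏ k ∈ Finset.Icc 1 t, Z k := by
  have hZ0 k (h1 : 1 ≤ k) (h2 : k ≤ t) : Z k ≠ 0 := (hZpos k h1 h2).ne'
  have hmass : ∑ p ∈ P, d (t + 1) p = 1 := by
    rcases Nat.eq_zero_or_pos t with rfl | ht
    · exact hd1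
    · exact sum_eq_one_of_eq_div_sum (hZ t ht le_rfl) (hZ0 t ht le_rfl) (hdrec t ht le_rfl)
  have hweight : ∀ p ∈ P, d 1 p * Real.exp (-(y p * ∑ k ∈ Icc 1 t, a k * h k p)) =
      d (t + 1) p * ∏ k ∈ Icc 1 t, Z k := by
    intro p hp
    have hunroll := mul_prod_Icc_eq_mul_prod_of_succ_eq_div (w := fun k => d k p)
      (g := fun k => Real.exp (-(a k) * (y p * h k p))) hZ0 (fun k h1 h2 => hdrec k h1 h2 p hp)
    rw [hunroll, mul_sum, ← sum_neg_distrib, Real.exp_sum]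
    congr 1
    exact prod_congr rfl fun k _ => by ring_nf
  rw [sum_congr rfl hweight, ← sum_mul, hmass, one_mul]

/-- In the binary AdaBoost recursion, the total weighted exponential loss equals the
product of the normalizers:
`Σ_p d₁(p)·exp(−y(p)·F_t(p)) = ∏_{k=1}^t Z_k` where `F_t(p) = Σ_{k=1}^t α_k h_k(p)`. -/
theorem adaboost_exp_loss_eq_prod_normalizers {α : Type*} (P : Finset α) (hP : P.Nonempty)
    (y : α → ℝ) (hy : ∀ p ∈ P, y p = 1 ∨ y p = -1)
    (t : ℕ) (h : ℕ → α → ℝ)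
    (hh : ∀ k, 1 ≤ k → k ≤ t → ∀ p ∈ P, h k p = 1 ∨ h k p = -1)
    (a : ℕ → ℝ)
    (d : ℕ → α → ℝ) (hd0 : ∀ p ∈ P, 0 ≤ d 1 p) (hd1 : ∑ p ∈ P, d 1 p = 1)
    (Z : ℕ → ℝ)
    (hZ : ∀ k, 1 ≤ k → k ≤ t →
      Z k = ∑ p ∈ P, d k p * Real.exp (-(a k) * (y p * h k p)))
    (hZpos : ∀ k, 1 ≤ k → k ≤ t → 0 < Z k)
    (hdrec : ∀ k, 1 ≤ k → k ≤ t → ∀ p ∈ P,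
      d (k + 1) p = d k p * Real.exp (-(a k) * (y p * h k p)) / Z k) :
    ∑ p ∈ P, d 1 p * Real.exp (-(y p * ∑ k ∈ Finset.Icc 1 t, a k * h k p)) =
      ∏ k ∈ Finset.Icc 1 t, Z k :=
  adaboost_exp_loss_eq_prod_normalizers_general P y t h a d hd1 Z hZ hZpos hdrec
end

section
/- Let A be a finite label set, m ≥ 1, y : {1,…,m} → A, η ∈ ℝ, F : {1,…,m} × A → ℝ, and h : {1,…,m} → A. Define the updated scores F'(i, a) = F(i, a) + 1[h(i) = a], the losses L(i) = Σ_{ã≠y_i} exp(η·(F(i,ã) − F(i,y_i))), L'(i) = Σ_{ã≠y_i} exp(η·(F'(i,ã) − F'(i,y_i))), and the averages L̃ = (1/m)·Σ_i L(i), L̃' = (1/m)·Σ_i L'(i). Then L̃' − L̃ = (1/m)·[ Σ_{i : h(i)=y_i} (e^{−η} − 1)·L(i) + Σ_{i : h(i)≠y_i} (e^{η} − 1)·exp(η·(F(i, h(i)) − F(i, y_i))) ]. (Recursive formula for the multiclass exponential loss under a one-step score update.) -/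
/-- Recursive formula for the multiclass exponential loss under a one-step score update:
with `F'(i,a) = F(i,a) + 1[h(i)=a]`,
`L̃' − L̃ = (1/m)·[ Σ_{i : h(i)=y_i} (e^{−η}−1)·L(i)
  + Σ_{i : h(i)≠y_i} (e^{η}−1)·exp(η(F(i,h(i)) − F(i,y_i))) ]`. -/
theorem multiclass_loss_recursion {A : Type*} [Fintype A] [DecidableEq A]
    (m : ℕ) (hm : 1 ≤ m)
    (y : Fin m → A) (η : ℝ) (F : Fin m → A → ℝ) (h : Fin m → A)
    (F' : Fin m → A → ℝ)
    (hF' : ∀ i a, F' i a = F i a + (if h i = a then (1 : ℝ) else 0))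
    (L L' : Fin m → ℝ)
    (hL : ∀ i, L i =
      ∑ b ∈ Finset.univ.erase (y i), Real.exp (η * (F i b - F i (y i))))
    (hL' : ∀ i, L' i =
      ∑ b ∈ Finset.univ.erase (y i), Real.exp (η * (F' i b - F' i (y i)))) :
    (1 / (m : ℝ)) * ∑ i, L' i - (1 / (m : ℝ)) * ∑ i, L i =
      (1 / (m : ℝ)) *
        ((∑ i ∈ Finset.univ.filter (fun i => h i = y i), (Real.exp (-η) - 1) * L i)
          + ∑ i ∈ Finset.univ.filter (fun i => h i ≠ y i),
              (Real.exp η - 1) * Real.exp (η * (F i (h i) - F i (y i)))) := by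
  rw [← mul_sub, ← Finset.sum_sub_distrib]
  congr 1
  rw [← Finset.sum_filter_add_sum_filter_not Finset.univ (fun i => h i = y i)
    (fun i => L' i - L i)]
  congr 1
  · apply Finset.sum_congr rfl
    intro i hi
    simp only [Finset.mem_filter] at hi
    have hLi : L' i = Real.exp (-η) * L i := by
      rw [hL, hL', Finset.mul_sum]
      apply Finset.sum_congr rfl
      intro b hb
      rw [Finset.mem_erase] at hb
      rw [hF', hF', if_pos hi.2, if_neg (by rw [hi.2]; exact fun e => hb.1 e.symm),
        ← Real.exp_add]
      ring_nf
    rw [hLi]; ring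
  · apply Finset.sum_congr rfl
    intro i hi
    simp only [Finset.mem_filter] at hi
    rw [hL, hL', ← Finset.sum_sub_distrib]
    rw [Finset.sum_eq_single (h i)]
    · rw [hF', hF', if_pos rfl, if_neg hi.2,
        show η * (F i (h i) + 1 - (F i (y i) + 0)) = η + η * (F i (h i) - F i (y i)) by ring,
        Real.exp_add]
      ring
    · intro b hb hbne
      rw [hF', hF', if_neg (fun e => hbne e.symm), if_neg hi.2]
      ring_nf
    · intro habs
      exact absurd (Finset.mem_erase.mpr ⟨hi.2, Finset.mem_univ _⟩) habs
end

section
/- Let A be a finite label set with |A| = k, m ≥ 1, y : {1,…,m} → A, η ∈ ℝ, γ ∈ [0,1], F : {1,…,m} × A → ℝ, and h : {1,…,m} → A. With L(i) = Σ_{ã≠y_i} exp(η·(F(i,ã) − F(i,y_i))) and L̃ = (1/m)·Σ_i L(i), suppose the update cost of h is no larger than that of the edge-γ random guesser, i.e. (1/m)·[ Σ_{i : h(i)=y_i} (e^{−η} − 1)·L(i) + Σ_{i : h(i)≠y_i} (e^{η} − 1)·exp(η·(F(i, h(i)) − F(i, y_i))) ] ≤ (1/m)·Σ_i [ ((1−γ)/k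 + γ)·(e^{−η} − 1) + ((1−γ)/k)·(e^{η} − 1) ]·L(i). Then the updated average loss L̃' (computed from F'(i,a) = F(i,a) + 1[h(i)=a]) satisfies L̃' ≤ (1 + ((1−γ)/k + γ)·(e^{−η} − 1) + ((1−γ)/k)·(e^{η} − 1))·L̃. -/
/-! Adding `1` to the score of the predicted label `h i` multiplies every term of `L i` by
`e^{-η}` when `h i = y i`, and otherwise multiplies only the term for `ã = h i`, by `e^η`.
Hence `L̃' - L̃` is exactly the update cost of `h`, which by hypothesis is at most the cost of
the edge-`γ` random guesser, a fixed multiple of `L̃`. -/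

open Finset Real

noncomputable def multiclassExpLoss {A : Type*} [Fintype A] [DecidableEq A]
    (η : ℝ) (f : A → ℝ) (y : A) : ℝ :=
  ∑ b ∈ univ.erase y, exp (η * (f b - f y))

section

variable {A : Type*} [Fintype A] [DecidableEq A] (η : ℝ) (f : A → ℝ) (y : A)

theorem multiclassExpLoss_add_indicator_self :
    multiclassExpLoss η (fun b => f b + if y = b then 1 else 0) y
      = exp (-η) * multiclassExpLoss η f y := by
  rw [multiclassExpLoss, multiclassExpLoss, mul_sum]
  refine sum_congr rfl fun b hb => ?_
  rw [if_neg (ne_of_mem_erase hb).symm, if_pos rfl, ← exp_add]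
  ring_nf

theorem multiclassExpLoss_add_indicator_of_ne {a : A} (ha : a ≠ y) :
    multiclassExpLoss η (fun b => f b + if a = b then 1 else 0) y
      = multiclassExpLoss η f y + (exp η - 1) * exp (η * (f a - f y)) := by
  have hterm : ∀ b, exp (η * (f b + (if a = b then 1 else 0) - (f y + if a = y then 1 else 0)))
      = exp (η * (f b - f y))
        + if a = b then (exp η - 1) * exp (η * (f b - f y)) else 0 := by
    intro b
    rw [if_neg ha]
    split_ifs
    · rw [show η * (f b + 1 - (f y + 0)) = η + η * (f b - f y) by ring, exp_add]
      ring
    · ring_nf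
  simp only [multiclassExpLoss, hterm, sum_add_distrib, sum_ite_eq,
    mem_erase.mpr ⟨ha, mem_univ a⟩, if_true]

theorem multiclassExpLoss_add_indicator (a : A) :
    multiclassExpLoss η (fun b => f b + if a = b then 1 else 0) y
      = multiclassExpLoss η f y
        + if a = y then (exp (-η) - 1) * multiclassExpLoss η f y
          else (exp η - 1) * exp (η * (f a - f y)) := by
  split_ifs with ha
  · subst ha
    rw [multiclassExpLoss_add_indicator_self]
    ring
  · exact multiclassExpLoss_add_indicator_of_ne η f y ha

end

theorem multiclass_loss_contraction_general {A : Type*} [Fintype A] [DecidableEq A]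
    (k : ℕ)
    (m : ℕ)
    (y : Fin m → A) (η γ : ℝ)
    (F : Fin m → A → ℝ) (h : Fin m → A)
    (F' : Fin m → A → ℝ)
    (hF' : ∀ i a, F' i a = F i a + (if h i = a then (1 : ℝ) else 0))
    (L L' : Fin m → ℝ)
    (hL : ∀ i, L i =
      ∑ b ∈ Finset.univ.erase (y i), Real.exp (η * (F i b - F i (y i))))
    (hL' : ∀ i, L' i =
      ∑ b ∈ Finset.univ.erase (y i), Real.exp (η * (F' i b - F' i (y i))))
    (hweak : (1 / (m : ℝ)) *
        ((∑ i ∈ Finset.univ.filter (fun i => h i = y i), (Real.exp (-η) - 1) * L i)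
          + ∑ i ∈ Finset.univ.filter (fun i => h i ≠ y i),
              (Real.exp η - 1) * Real.exp (η * (F i (h i) - F i (y i)))) ≤
      (1 / (m : ℝ)) * ∑ i,
        (((1 - γ) / (k : ℝ) + γ) * (Real.exp (-η) - 1)
          + ((1 - γ) / (k : ℝ)) * (Real.exp η - 1)) * L i) :
    (1 / (m : ℝ)) * ∑ i, L' i ≤
      (1 + ((1 - γ) / (k : ℝ) + γ) * (Real.exp (-η) - 1)
         + ((1 - γ) / (k : ℝ)) * (Real.exp η - 1)) * ((1 / (m : ℝ)) * ∑ i, L i) := by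
  have hL'_eq : ∀ i, L' i = L i + if h i = y i then (exp (-η) - 1) * L i
      else (exp η - 1) * exp (η * (F i (h i) - F i (y i))) := by
    intro i
    rw [hL' i, hL i]
    simp only [hF']
    exact multiclassExpLoss_add_indicator η (F i) (y i) (h i)
  calc (1 / (m : ℝ)) * ∑ i, L' i
      = (1 / (m : ℝ)) * ∑ i, L i
        + (1 / (m : ℝ)) *
          ((∑ i ∈ univ.filter (fun i => h i = y i), (exp (-η) - 1) * L i)
            + ∑ i ∈ univ.filter (fun i => h i ≠ y i),
                (exp η - 1) * exp (η * (F i (h i) - F i (y i)))) := by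
        simp only [hL'_eq, sum_add_distrib, sum_ite, mul_add]
    _ ≤ _ := add_le_add_right hweak _
    _ = _ := by rw [← mul_sum]; ring

/-- One-round contraction of the multiclass exponential loss: if the update cost of the
weak hypothesis `h` is no larger than that of the edge-`γ` random guesser, then the
updated average loss satisfies
`L̃' ≤ (1 + ((1−γ)/k + γ)(e^{−η}−1) + ((1−γ)/k)(e^{η}−1))·L̃`. -/
theorem multiclass_loss_contraction {A : Type*} [Fintype A] [DecidableEq A]
    (k : ℕ) (hk : Fintype.card A = k)
    (m : ℕ) (hm : 1 ≤ m)
    (y : Fin m → A) (η γ : ℝ) (hγ0 : 0 ≤ γ) (hγ1 : γ ≤ 1)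
    (F : Fin m → A → ℝ) (h : Fin m → A)
    (F' : Fin m → A → ℝ)
    (hF' : ∀ i a, F' i a = F i a + (if h i = a then (1 : ℝ) else 0))
    (L L' : Fin m → ℝ)
    (hL : ∀ i, L i =
      ∑ b ∈ Finset.univ.erase (y i), Real.exp (η * (F i b - F i (y i))))
    (hL' : ∀ i, L' i =
      ∑ b ∈ Finset.univ.erase (y i), Real.exp (η * (F' i b - F' i (y i))))
    (hweak : (1 / (m : ℝ)) *
        ((∑ i ∈ Finset.univ.filter (fun i => h i = y i), (Real.exp (-η) - 1) * L i)
          + ∑ i ∈ Finset.univ.filter (fun i => h i ≠ y i),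
              (Real.exp η - 1) * Real.exp (η * (F i (h i) - F i (y i)))) ≤
      (1 / (m : ℝ)) * ∑ i,
        (((1 - γ) / (k : ℝ) + γ) * (Real.exp (-η) - 1)
          + ((1 - γ) / (k : ℝ)) * (Real.exp η - 1)) * L i) :
    (1 / (m : ℝ)) * ∑ i, L' i ≤
      (1 + ((1 - γ) / (k : ℝ) + γ) * (Real.exp (-η) - 1)
         + ((1 - γ) / (k : ℝ)) * (Real.exp η - 1)) * ((1 / (m : ℝ)) * ∑ i, L i) :=
  multiclass_loss_contraction_general k m y η γ F h F' hF' L L' hL hL' hweak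
end

section
/- For every real γ ∈ (0, 1] and every natural number k ≥ 2, the quantity z_k(γ) = 1 + ((1−γ)/k + γ)·(1/(1+γ) − 1) + ((1−γ)/k)·γ satisfies z_k(γ) ≤ z_2(γ) = 1 − γ²/2 ≤ exp(−γ²/2); moreover z_k(γ) is nonincreasing as a function of k. -/
/-- The per-round contraction factor of the multiclass boosting loss with `k` labels,
edge `γ` and step size `η = log(1+γ)` (so that `e^{−η} − 1 = 1/(1+γ) − 1` and
`e^{η} − 1 = γ`). -/
noncomputable def zfac (k : ℕ) (γ : ℝ) : ℝ :=
  1 + ((1 - γ) / (k : ℝ) + γ) * (1 / (1 + γ) - 1) + ((1 - γ) / (k : ℝ)) * γ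

lemma zfac_eq (k : ℕ) (hk : (k : ℝ) ≠ 0) (γ : ℝ) (hγ : 1 + γ ≠ 0) :
    zfac k γ = 1 - γ ^ 2 / (1 + γ) + γ ^ 2 * (1 - γ) / ((k : ℝ) * (1 + γ)) := by
  unfold zfac
  field_simp
  ring

lemma zfac_anti (γ : ℝ) (h0 : 0 < γ) (h1 : γ ≤ 1) {k k' : ℕ} (hk : 1 ≤ k) (hkk : k ≤ k') :
    zfac k' γ ≤ zfac k γ := by
  have hγ : (0:ℝ) < 1 + γ := by linarith
  have hkpos : (0:ℝ) < (k : ℝ) := by exact_mod_cast Nat.lt_of_lt_of_le Nat.zero_lt_one hk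
  have hk'pos : (0:ℝ) < (k' : ℝ) := lt_of_lt_of_le hkpos (by exact_mod_cast hkk)
  rw [zfac_eq k hkpos.ne' γ hγ.ne', zfac_eq k' hk'pos.ne' γ hγ.ne']
  have hnum : 0 ≤ γ ^ 2 * (1 - γ) := by nlinarith
  have : γ ^ 2 * (1 - γ) / ((k' : ℝ) * (1 + γ)) ≤ γ ^ 2 * (1 - γ) / ((k : ℝ) * (1 + γ)) := by
    gcongr
  linarith

/-- For every `γ ∈ (0,1]` and every `k ≥ 2`, the contraction factor satisfies
`z_k(γ) ≤ z_2(γ) = 1 − γ²/2 ≤ exp(−γ²/2)`; moreover `z_k(γ)` is nonincreasing in `k`. -/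
theorem contraction_factor_bound (γ : ℝ) (h0 : 0 < γ) (h1 : γ ≤ 1) (k : ℕ) (hk : 2 ≤ k) :
    zfac k γ ≤ zfac 2 γ ∧ zfac 2 γ = 1 - γ ^ 2 / 2 ∧
      1 - γ ^ 2 / 2 ≤ Real.exp (-(γ ^ 2) / 2) ∧
      ∀ k' : ℕ, k ≤ k' → zfac k' γ ≤ zfac k γ := by
  have hγ : (1:ℝ) + γ ≠ 0 := by linarith
  refine ⟨zfac_anti γ h0 h1 (by norm_num) hk, ?_, ?_, fun k' hkk =>
    zfac_anti γ h0 h1 (le_trans (by norm_num) hk) hkk⟩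
  · unfold zfac
    push_cast
    field_simp
    ring
  · have := Real.add_one_le_exp (-(γ ^ 2) / 2)
    linarith
end

section
/- Let v_H, v_L, c_1, c_2, c_L be reals with c_1 > v_H > c_2 > v_L > c_L, and let r ∈ (0, 1) satisfy r·c_1 + (1 − r)·c_2 > v_H. Then for every q ∈ [0, 1] and every price p such that p > v_L and q·v_H + (1 − q)·v_L ≥ p, the seller's expected profit from selling at p satisfies (1 − q)·(p − c_L) + q·(p − r·c_1 − (1 − r)·c_2) < v_L − c_L. (In Rubinstein's monopoly/lemons model, any price above v_L at which buyers weakly prefer to buy yields strictly less profit than selling at v_L in the low state.) -/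
/-- In Rubinstein's monopoly/lemons model, any price `p > v_L` at which buyers weakly
prefer to buy (given posterior probability `q` of the high state) yields strictly less
expected profit than selling at `v_L` in the low state:
`(1−q)(p − c_L) + q(p − r·c₁ − (1−r)·c₂) < v_L − c_L`. -/
theorem lemons_profit_bound (vH vL c1 c2 cL r : ℝ)
    (h1 : c1 > vH) (h2 : vH > c2) (h3 : c2 > vL) (h4 : vL > cL)
    (hr0 : 0 < r) (hr1 : r < 1)
    (hlemon : r * c1 + (1 - r) * c2 > vH)
    (q p : ℝ) (hq0 : 0 ≤ q) (hq1 : q ≤ 1)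
    (hp : p > vL) (hbuy : q * vH + (1 - q) * vL ≥ p) :
    (1 - q) * (p - cL) + q * (p - r * c1 - (1 - r) * c2) < vL - cL := by
  rcases eq_or_lt_of_le hq0 with h|h
  · nlinarith [h.symm]
  · nlinarith [mul_pos h (sub_pos.2 hlemon)]
end

section
/- Let Θ be a finite nonempty set, v : Θ → ℝ with |v(θ)| ≤ V for all θ, and π : Θ → ℝ with π(θ) ≥ 0 and Σ_θ π(θ) = 1. Let f, g : Θ → ℝ be nonnegative, and let γ > ε̃ > 0 be reals such that Σ_θ f(θ)·π(θ) ≥ γ, Σ_θ g(θ)·π(θ) ≥ γ − ε̃, and |f(θ) − g(θ)| ≤ ε̃ for every θ. Then | Σ_θ v(θ)·f(θ)·π(θ) / Σ_θ f(θ)·π(θ) − Σ_θ v(θ)·g(θ)·π(θ) / Σ_θ g(θ)·π(θ) | ≤ 2·V·ε̃ / (γ − ε̃). (A uniform perturbation of the conditional densities changes the posterior expected value by at most 2Vε̃/(γ − ε̃).) -/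
/-- A uniform perturbation of the conditional densities changes the posterior expected
value by at most `2Vε̃/(γ − ε̃)`: if `|v| ≤ V`, `π` is a prior, `f, g ≥ 0` with
`Σ f π ≥ γ`, `Σ g π ≥ γ − ε̃` and `|f − g| ≤ ε̃` pointwise (`0 < ε̃ < γ`), then
`| Σ v f π / Σ f π − Σ v g π / Σ g π | ≤ 2Vε̃/(γ − ε̃)`. -/
theorem posterior_perturbation_bound {Θ : Type*} [Fintype Θ] [Nonempty Θ]
    (v : Θ → ℝ) (V : ℝ) (hV : ∀ θ, |v θ| ≤ V)
    (π : Θ → ℝ) (hπ0 : ∀ θ, 0 ≤ π θ) (hπ1 : ∑ θ, π θ = 1)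
    (f g : Θ → ℝ) (hf0 : ∀ θ, 0 ≤ f θ) (hg0 : ∀ θ, 0 ≤ g θ)
    (γ ε : ℝ) (hε : 0 < ε) (hγε : ε < γ)
    (hfγ : γ ≤ ∑ θ, f θ * π θ) (hgγ : γ - ε ≤ ∑ θ, g θ * π θ)
    (hfg : ∀ θ, |f θ - g θ| ≤ ε) :
    |(∑ θ, v θ * f θ * π θ) / (∑ θ, f θ * π θ) -
        (∑ θ, v θ * g θ * π θ) / (∑ θ, g θ * π θ)| ≤
      2 * V * ε / (γ - ε) := by
  set A := ∑ θ, v θ * f θ * π θ with hA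
  set B := ∑ θ, f θ * π θ with hBdef
  set C := ∑ θ, v θ * g θ * π θ with hC
  set D := ∑ θ, g θ * π θ with hDdef
  obtain ⟨θ0⟩ := ‹Nonempty Θ›
  have hV0 : 0 ≤ V := le_trans (abs_nonneg _) (hV θ0)
  have hB : 0 < B := lt_of_lt_of_le (by linarith) hfγ
  have hD : 0 < D := lt_of_lt_of_le (by linarith) hgγ
  -- |A| ≤ V * B
  have hAb : |A| ≤ V * B := by
    calc |A| ≤ ∑ θ, |v θ * f θ * π θ| := Finset.abs_sum_le_sum_abs _ _
      _ ≤ ∑ θ, V * (f θ * π θ) := by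
          apply Finset.sum_le_sum
          intro θ _
          rw [abs_mul, abs_mul, abs_of_nonneg (hf0 θ), abs_of_nonneg (hπ0 θ), mul_assoc]
          exact mul_le_mul_of_nonneg_right (hV θ)
            (mul_nonneg (hf0 θ) (hπ0 θ))
      _ = V * B := by rw [hBdef, Finset.mul_sum]
  -- |A - C| ≤ V * ε
  have hAC : |A - C| ≤ V * ε := by
    have : A - C = ∑ θ, v θ * (f θ - g θ) * π θ := by
      rw [hA, hC, ← Finset.sum_sub_distrib]
      congr 1; ext θ; ring
    rw [this]
    calc |∑ θ, v θ * (f θ - g θ) * π θ| ≤ ∑ θ, |v θ * (f θ - g θ) * π θ| :=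
          Finset.abs_sum_le_sum_abs _ _
      _ ≤ ∑ θ, V * ε * π θ := by
          apply Finset.sum_le_sum
          intro θ _
          rw [abs_mul, abs_mul, abs_of_nonneg (hπ0 θ)]
          exact mul_le_mul_of_nonneg_right
            (mul_le_mul (hV θ) (hfg θ) (abs_nonneg _) hV0) (hπ0 θ)
      _ = V * ε := by rw [← Finset.mul_sum, hπ1, mul_one]
  -- |D - B| ≤ ε
  have hDB : |D - B| ≤ ε := by
    have : D - B = ∑ θ, (g θ - f θ) * π θ := by
      rw [hDdef, hBdef, ← Finset.sum_sub_distrib]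
      congr 1; ext θ; ring
    rw [this]
    calc |∑ θ, (g θ - f θ) * π θ| ≤ ∑ θ, |(g θ - f θ) * π θ| :=
          Finset.abs_sum_le_sum_abs _ _
      _ ≤ ∑ θ, ε * π θ := by
          apply Finset.sum_le_sum
          intro θ _
          rw [abs_mul, abs_of_nonneg (hπ0 θ)]
          refine mul_le_mul_of_nonneg_right ?_ (hπ0 θ)
          rw [abs_sub_comm]; exact hfg θ
      _ = ε := by rw [← Finset.mul_sum, hπ1, mul_one]
  have key : |A * D - C * B| ≤ 2 * V * ε * B := by
    have : A * D - C * B = A * (D - B) + (A - C) * B := by ring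
    rw [this]
    calc |A * (D - B) + (A - C) * B| ≤ |A * (D - B)| + |(A - C) * B| := abs_add_le _ _
      _ = |A| * |D - B| + |A - C| * B := by
          rw [abs_mul, abs_mul, abs_of_pos hB]
      _ ≤ (V * B) * ε + (V * ε) * B := by gcongr
      _ = 2 * V * ε * B := by ring
  rw [div_sub_div A C hB.ne' hD.ne', abs_div, abs_of_pos (mul_pos hB hD)]
  rw [div_le_div_iff₀ (mul_pos hB hD) (by linarith : (0:ℝ) < γ - ε)]
  have key' : |A * D - B * C| ≤ 2 * V * ε * B := by rw [mul_comm B C]; exact key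
  have hBε : 0 ≤ 2 * V * ε * B := by positivity
  nlinarith [mul_le_mul_of_nonneg_right key' (le_of_lt (by linarith : (0:ℝ) < γ - ε)),
    mul_le_mul_of_nonneg_left hgγ hBε]
end
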